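/- There exist Boolean CRPQs Q₁ and Q₂ such that Q₁ ⊆_{q-inj} Q₂ holds but Q₁ ⊆_{a-inj} Q₂ fails. Concretely, for Q₁ = (x →^{a} y ∧ y →^{b} z) and Q₂ = (x →^{ab} y), containment holds under query-injective (and standard) semantics but fails under atom-injective semantics. -/

import Mathlib

/-- A graph database over a finite alphabet `A`: a finite set of nodes with
`A`-labeled directed edges. -/
structure GraphDB (A : Type) where
  V : Type
  fin : Finite V
  E : V → A → V → Prop

namespace GraphDB

variable {A : Type} (G : GraphDB A)

/-- `Chain u s` holds when `s` is a list of (label, next-vertex) steps forming a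
directed path starting at `u`. -/
def Chain : G.V → List (A × G.V) → Prop
  | _, [] => True
  | u, (a, v) :: rest => G.E u a v ∧ Chain v rest

/-- Endpoint of the path starting at `u` with steps `s`. -/
def endOf (u : G.V) (s : List (A × G.V)) : G.V := (s.map Prod.snd).getLastD u

/-- Label (word) of a path. -/
def label (s : List (A × G.V)) : List A := s.map Prod.fst

/-- The list of nodes visited by the path starting at `u` with steps `s`. -/
def nodes (u : G.V) (s : List (A × G.V)) : List G.V := u :: s.map Prod.snd

/-- Internal nodes of a path: all visited nodes except the first and the last. -/
def internal (u : G.V) (s : List (A × G.V)) : List G.V := (s.map Prod.snd).dropLast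

/-- A simple path: no repeated nodes. -/
def IsSimplePath (u : G.V) (s : List (A × G.V)) : Prop := (G.nodes u s).Nodup

/-- A simple cycle: returns to its start and repeats no other node. -/
def IsSimpleCycle (u : G.V) (s : List (A × G.V)) : Prop :=
  G.endOf u s = u ∧ (u :: (s.map Prod.snd).dropLast).Nodup

end GraphDB

/-- A conjunctive regular path query with `n` (not necessarily distinct) free
variables: finitely many variables and `m` atoms `src i →^{lang i} tgt i`,
where each `lang i` is a language over `A`. -/
structure CRPQ (A : Type) (n : ℕ) where
  X : Type
  fin : Finite X
  m : ℕ
  src : Fin m → X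
  lang : Fin m → Set (List A)
  tgt : Fin m → X
  free : Fin n → X

namespace CRPQ

variable {A : Type} {n : ℕ} (Q : CRPQ A n) (G : GraphDB A)

/-- `s` is a witnessing path for atom `i` under the assignment `μ`. -/
def Wit (μ : Q.X → G.V) (i : Fin Q.m) (s : List (A × G.V)) : Prop :=
  G.Chain (μ (Q.src i)) s ∧ G.endOf (μ (Q.src i)) s = μ (Q.tgt i) ∧
    G.label s ∈ Q.lang i

/-- A witnessing path which is moreover a simple path (a simple cycle if the
atom's endpoints are the same variable). -/
def WitSimple (μ : Q.X → G.V) (i : Fin Q.m) (s : List (A × G.V)) : Prop :=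
  Q.Wit G μ i s ∧
    (Q.src i = Q.tgt i → G.IsSimpleCycle (μ (Q.src i)) s) ∧
    (Q.src i ≠ Q.tgt i → G.IsSimplePath (μ (Q.src i)) s)

/-- Standard semantics. -/
def evalSt : Set (Fin n → G.V) :=
  { v | ∃ μ : Q.X → G.V, (∀ j, μ (Q.free j) = v j) ∧ ∀ i, ∃ s, Q.Wit G μ i s }

/-- Atom-injective semantics: each atom is witnessed by a simple path
(simple cycle for atoms with equal endpoints). -/
def evalAInj : Set (Fin n → G.V) :=
  { v | ∃ μ : Q.X → G.V, (∀ j, μ (Q.free j) = v j) ∧ ∀ i, ∃ s, Q.WitSimple G μ i s }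

/-- Query-injective semantics: additionally the variable assignment is
injective, witnessing simple paths of distinct atoms share no internal nodes,
and internal nodes of witnessing paths avoid the images of the variables. -/
def evalQInj : Set (Fin n → G.V) :=
  { v | ∃ μ : Q.X → G.V, Function.Injective μ ∧ (∀ j, μ (Q.free j) = v j) ∧
      ∃ π : (i : Fin Q.m) → List (A × G.V),
        (∀ i, Q.WitSimple G μ i (π i)) ∧
        (∀ i j, i ≠ j → ∀ x, x ∈ G.internal (μ (Q.src i)) (π i) →
          x ∉ G.internal (μ (Q.src j)) (π j)) ∧
        (∀ i, ∀ x ∈ G.internal (μ (Q.src i)) (π i), ∀ z, x ≠ μ z) }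

end CRPQ

/-- Containment under standard semantics. -/
def ContainedSt {A : Type} {n : ℕ} (Q₁ Q₂ : CRPQ A n) : Prop :=
  ∀ G : GraphDB A, Q₁.evalSt G ⊆ Q₂.evalSt G

/-- Containment under atom-injective semantics. -/
def ContainedAInj {A : Type} {n : ℕ} (Q₁ Q₂ : CRPQ A n) : Prop :=
  ∀ G : GraphDB A, Q₁.evalAInj G ⊆ Q₂.evalAInj G

/-- Containment under query-injective semantics. -/
def ContainedQInj {A : Type} {n : ℕ} (Q₁ Q₂ : CRPQ A n) : Prop :=
  ∀ G : GraphDB A, Q₁.evalQInj G ⊆ Q₂.evalQInj G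

/-- The Boolean CRPQ `Q₁ = x →^a y ∧ y →^b z` (with `a = 0`, `b = 1`). -/
def Q₁'' : CRPQ (Fin 2) 0 where
  X := Fin 3
  fin := inferInstance
  m := 2
  src := ![0, 1]
  lang := ![{[0]}, {[1]}]
  tgt := ![1, 2]
  free := fun j => j.elim0

/-- The Boolean CRPQ `Q₂ = x →^{ab} y`. -/
def Q₂'' : CRPQ (Fin 2) 0 where
  X := Fin 2
  fin := inferInstance
  m := 1
  src := fun _ => 0
  lang := fun _ => {[0, 1]}
  tgt := fun _ => 1
  free := fun j => j.elim0

lemma map_fst_single {α β : Type*} {s : List (α × β)} {a : α}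
    (h : s.map Prod.fst = [a]) : ∃ v, s = [(a, v)] := by
  match s with
  | [] => simp at h
  | [(a', v)] => simp at h; exact ⟨v, by simp [h]⟩
  | p :: q :: r => simp at h

lemma map_fst_pair {α β : Type*} {s : List (α × β)} {a b : α}
    (h : s.map Prod.fst = [a, b]) : ∃ u w, s = [(a, u), (b, w)] := by
  match s with
  | [] => simp at h
  | [p] => simp at h
  | [(a', u), (b', w)] => simp at h; exact ⟨u, w, by simp [h.1, h.2]⟩
  | p :: q :: r :: t => simp at h

/-- The counterexample graph: two nodes, `0 →^a 1` and `1 →^b 0`. -/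
def G₀'' : GraphDB (Fin 2) where
  V := Fin 2
  fin := inferInstance
  E := fun u a v => (u = 0 ∧ a = 0 ∧ v = 1) ∨ (u = 1 ∧ a = 1 ∧ v = 0)

/-- Extract the standard-semantics data of `Q₁''`. -/
lemma Q₁_data {G : GraphDB (Fin 2)} {μ : Q₁''.X → G.V}
    (hw : ∀ i, ∃ s, Q₁''.Wit G μ i s) :
    G.E (μ ((0 : Fin 3))) 0 (μ ((1 : Fin 3))) ∧
      G.E (μ ((1 : Fin 3))) 1 (μ ((2 : Fin 3))) := by
  obtain ⟨s₀, hw₀⟩ := hw ((0 : Fin 2))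
  obtain ⟨s₁, hw₁⟩ := hw ((1 : Fin 2))
  have hc₀ : G.Chain (μ ((0 : Fin 3))) s₀ := hw₀.1
  have he₀ : G.endOf (μ ((0 : Fin 3))) s₀ = μ ((1 : Fin 3)) := hw₀.2.1
  have hl₀ : s₀.map Prod.fst = [0] := hw₀.2.2
  have hc₁ : G.Chain (μ ((1 : Fin 3))) s₁ := hw₁.1
  have he₁ : G.endOf (μ ((1 : Fin 3))) s₁ = μ ((2 : Fin 3)) := hw₁.2.1
  have hl₁ : s₁.map Prod.fst = [1] := hw₁.2.2
  obtain ⟨v, rfl⟩ := map_fst_single hl₀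
  obtain ⟨w, rfl⟩ := map_fst_single hl₁
  simp [GraphDB.Chain, GraphDB.endOf] at hc₀ he₀ hc₁ he₁
  subst he₀; subst he₁
  exact ⟨hc₀, hc₁⟩

lemma no_ab_simple_path (m0 u w : Fin 2)
    (h1 : (m0 = 0 ∧ (0 : Fin 2) = 0 ∧ u = 1) ∨ (m0 = 1 ∧ (0 : Fin 2) = 1 ∧ u = 0))
    (h2 : (u = 0 ∧ (1 : Fin 2) = 0 ∧ w = 1) ∨ (u = 1 ∧ (1 : Fin 2) = 1 ∧ w = 0))
    (hnd : List.Nodup [m0, u, w]) : False := by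
  fin_cases m0 <;> fin_cases u <;> fin_cases w <;> simp_all

/-- `Q₁ ⊆_{q-inj} Q₂` and `Q₁ ⊆_{st} Q₂` hold, but
`Q₁ ⊆_{a-inj} Q₂` fails. -/
theorem qinj_containment_not_ainj :
    ContainedQInj Q₁'' Q₂'' ∧ ContainedSt Q₁'' Q₂'' ∧ ¬ ContainedAInj Q₁'' Q₂'' := by
  refine ⟨?_, ?_, ?_⟩
  · -- query-injective containment
    rintro G v ⟨μ, hinj, hfree, π, hwit, -, -⟩
    have hdata := Q₁_data (fun i => ⟨π i, (hwit i).1⟩)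
    have h01 : μ ((0 : Fin 3)) ≠ μ ((1 : Fin 3)) :=
      fun h => absurd (hinj h) (by decide : ¬ (0 : Fin 3) = 1)
    have h02 : μ ((0 : Fin 3)) ≠ μ ((2 : Fin 3)) :=
      fun h => absurd (hinj h) (by decide : ¬ (0 : Fin 3) = 2)
    have h12 : μ ((1 : Fin 3)) ≠ μ ((2 : Fin 3)) :=
      fun h => absurd (hinj h) (by decide : ¬ (1 : Fin 3) = 2)
    have hinj2 : Function.Injective (![μ ((0 : Fin 3)), μ ((2 : Fin 3))] : Fin 2 → G.V) := by
      intro a b hab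
      fin_cases a <;> fin_cases b <;> simp_all <;>
        first
          | exact absurd hab h02
          | exact absurd hab.symm h02
    have hnd3 : List.Nodup [μ ((0 : Fin 3)), μ ((1 : Fin 3)), μ ((2 : Fin 3))] := by
      simp [h01, h02, h12]
    have havoid : ∀ z : Fin 2,
        μ ((1 : Fin 3)) ≠ (![μ ((0 : Fin 3)), μ ((2 : Fin 3))] : Fin 2 → G.V) z := by
      intro z
      fin_cases z
      · simpa using fun h => h01 h.symm
      · simpa using h12
    refine ⟨(![μ ((0 : Fin 3)), μ ((2 : Fin 3))] : Fin 2 → G.V), hinj2, fun j => j.elim0,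
      fun _ => [(0, μ ((1 : Fin 3))), (1, μ ((2 : Fin 3)))], ?_, ?_, ?_⟩
    · intro i
      refine ⟨⟨⟨hdata.1, hdata.2, trivial⟩, rfl, rfl⟩, ?_, fun _ => hnd3⟩
      intro h; exact absurd h (by decide : ¬ (0 : Fin 2) = 1)
    · intro i j hij
      have hi : i.val < 1 := i.isLt
      have hj : j.val < 1 := j.isLt
      exact absurd (Fin.ext (by omega)) hij
    · intro i x hx z
      have hx' : x ∈ [μ ((1 : Fin 3))] := hx
      simp at hx'
      subst hx'
      exact havoid z
  · -- standard containment
    rintro G v ⟨μ, hfree, hw⟩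
    obtain ⟨h₁, h₂⟩ := Q₁_data hw
    exact ⟨(![μ ((0 : Fin 3)), μ ((2 : Fin 3))] : Fin 2 → G.V), fun j => j.elim0,
      fun _ => ⟨[(0, μ ((1 : Fin 3))), (1, μ ((2 : Fin 3)))],
        ⟨h₁, h₂, trivial⟩, rfl, rfl⟩⟩
  · -- atom-injective containment fails
    intro h
    have hmem : (Fin.elim0 : Fin 0 → G₀''.V) ∈ Q₁''.evalAInj G₀'' := by
      refine ⟨(fun k : Fin 3 => if k = 1 then (1 : Fin 2) else (0 : Fin 2)), fun j => j.elim0, ?_⟩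
      have key : ∀ i : Fin 2, ∃ s,
          Q₁''.WitSimple G₀'' (fun k : Fin 3 => if k = 1 then (1 : Fin 2) else (0 : Fin 2)) i s := by
        intro i
        fin_cases i
        · refine ⟨[((0 : Fin 2), (1 : Fin 2))], ⟨?_, rfl, rfl⟩, ?_, ?_⟩
          · exact ⟨Or.inl ⟨rfl, rfl, rfl⟩, trivial⟩
          · intro hst; exact absurd hst (by decide : ¬ (0 : Fin 3) = 1)
          · intro _; exact (by decide : List.Nodup [(0 : Fin 2), 1])
        · refine ⟨[((1 : Fin 2), (0 : Fin 2))], ⟨?_, rfl, rfl⟩, ?_, ?_⟩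
          · exact ⟨Or.inr ⟨rfl, rfl, rfl⟩, trivial⟩
          · intro hst; exact absurd hst (by decide : ¬ (1 : Fin 3) = 2)
          · intro _; exact (by decide : List.Nodup [(1 : Fin 2), 0])
      exact fun i => key i
    obtain ⟨μ, -, hw⟩ := h G₀'' hmem
    obtain ⟨s, ⟨hc, he, hl⟩, -, hsp⟩ := hw ((0 : Fin 1))
    have hsp := hsp (by decide : ¬ (0 : Fin 2) = 1)
    have hl' : s.map Prod.fst = [0, 1] := hl
    obtain ⟨u, w, rfl⟩ := map_fst_pair hl'
    exact no_ab_simple_path (μ ((0 : Fin 2))) u w hc.1 hc.2.1 hsp
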